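/- arXiv:math/0702578 — 3 statements merged into one kernel-verified Lean document; each statement's English description precedes it below -/
import Mathlib

section
/- (Proposition 'formule' of the paper.) For every α : U → ℝ and every λ : T → ℝ, the identity q(α,λ) = q'(α) − q''(α) holds. -/
open Finset Function

/-!
With `A = ∑ α u * α (σ u)`, `B = ∑ a t * z t ^ 2 / d t` and `C = ∑ α u ^ 2 * x u / x (σ u)`,
one has `q = A - B`, `q' = C - B` and `q'' = C - A`. The Hodge term contracts to
`d t * λ t - z t ^ 2` since `z t = ∑ c t u * y u`; `q''` is a square expanded and reindexed by `σ`;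
for `q'`, a weighted Lagrange identity evaluates the double sum over `U` for each `t`, and
exchanging the sums over `t` and `u` turns `∑ t, c t u * a t` into `x (σ u)`.
-/

theorem sum_sum_weighted_cross_sq_div {ι : Type*} [Fintype ι] (w f g : ι → ℝ)
    (hf : ∀ i, f i ≠ 0) :
    ∑ i, ∑ j, w i * w j / (f i * f j) * (f i * g j - g i * f j) ^ 2
      = 2 * (∑ i, w i * f i) * (∑ i, w i * g i ^ 2 / f i) - 2 * (∑ i, w i * g i) ^ 2 := by
  have expand : ∀ i j, w i * w j / (f i * f j) * (f i * g j - g i * f j) ^ 2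
      = w i * f i * (w j * g j ^ 2 / f j) + w i * g i ^ 2 / f i * (w j * f j)
        - 2 * (w i * g i * (w j * g j)) := by
    intro i j
    field_simp [hf i, hf j]
    ring
  simp only [expand, sum_add_distrib, sum_sub_distrib, ← mul_sum, ← sum_mul]
  ring

theorem Function.Involutive.sum_cross_sq_div {ι : Type*} [Fintype ι] {σ : ι → ι}
    (hσ : Involutive σ) (x α : ι → ℝ) (hx : ∀ i, x i ≠ 0) :
    ∑ i, (x i * α i - α (σ i) * x (σ i)) ^ 2 / (x i * x (σ i))
      = 2 * ∑ i, α i ^ 2 * x i / x (σ i) - 2 * ∑ i, α i * α (σ i) := by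
  have expand : ∀ i, (x i * α i - α (σ i) * x (σ i)) ^ 2 / (x i * x (σ i))
      = α i ^ 2 * x i / x (σ i) + α (σ i) ^ 2 * x (σ i) / x (σ (σ i))
        - 2 * (α i * α (σ i)) := by
    intro i
    rw [hσ i]
    field_simp [hx i, hx (σ i)]
    ring
  rw [sum_congr rfl fun i _ => expand i, sum_sub_distrib, sum_add_distrib, ← mul_sum,
    hσ.bijective.sum_comp fun i => α i ^ 2 * x i / x (σ i)]
  ring

theorem half_sum_sum_weighted_cross_sq_div {T U : Type*} [Fintype T] [Fintype U]
    (a d : T → ℝ) (c : T → U → ℝ) (x β : U → ℝ)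
    (hd : ∀ t, d t = ∑ u, c t u * x u) (hdne : ∀ t, d t ≠ 0) (hxne : ∀ u, x u ≠ 0) :
    (1 / 2) * ∑ t, ∑ u, ∑ u',
      (a t * c t u * c t u') / (d t * x u * x u') * (x u * β u' - β u * x u') ^ 2
      = ∑ u, (∑ t, c t u * a t) * β u ^ 2 / x u - ∑ t, a t * (∑ u, c t u * β u) ^ 2 / d t := by
  have per_t : ∀ t, ∑ u, ∑ u',
      (a t * c t u * c t u') / (d t * x u * x u') * (x u * β u' - β u * x u') ^ 2
      = 2 * (a t * ∑ u, c t u * β u ^ 2 / x u) - 2 * (a t * (∑ u, c t u * β u) ^ 2 / d t) := by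
    intro t
    have factor : ∀ u u', (a t * c t u * c t u') / (d t * x u * x u')
        = a t / d t * (c t u * c t u' / (x u * x u')) := fun u u' => by ring
    simp_rw [factor, mul_assoc (a t / d t), ← mul_sum,
      sum_sum_weighted_cross_sq_div (c t) x β hxne, ← hd]
    field_simp [hdne t]
  have swap : ∑ t, a t * ∑ u, c t u * β u ^ 2 / x u = ∑ u, (∑ t, c t u * a t) * β u ^ 2 / x u := by
    simp only [mul_sum, sum_mul, sum_div]
    rw [sum_comm]
    exact sum_congr rfl fun u _ => sum_congr rfl fun t _ => by ring
  rw [sum_congr rfl fun t _ => per_t t, sum_sub_distrib, ← mul_sum, ← mul_sum, swap]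
  ring

theorem stmt_2_general {T U : Type*} [Fintype T] [Fintype U]
    (σ : U → U) (hσ : ∀ u, σ (σ u) = u)
    (a : T → ℝ)
    (c : T → U → ℝ)
    (x : U → ℝ) (hx : ∀ u, x u = ∑ t, c t (σ u) * a t)
    (d : T → ℝ) (hd : ∀ t, d t = ∑ u, c t u * x u)
    (hxpos : ∀ u, 0 < x u) (hdpos : ∀ t, 0 < d t)
    (y : (U → ℝ) → U → ℝ) (hy : ∀ α u, y α u = α (σ u))
    (z : (U → ℝ) → T → ℝ) (hz : ∀ α t, z α t = ∑ u, c t (σ u) * α u)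
    (P : (U → ℝ) → (T → ℝ) → ℝ)
    (hP : ∀ α lam, P α lam = (∑ u, α u * α (σ u)) - ∑ t, a t * lam t)
    (Hodge : T → (U → ℝ) → (T → ℝ) → ℝ)
    (hHodge : ∀ t α lam, Hodge t α lam = ∑ u, c t u * (x u * lam t - y α u * z α t))
    (q : (U → ℝ) → (T → ℝ) → ℝ)
    (hq : ∀ α lam, q α lam = P α lam + ∑ t, (a t / d t) * Hodge t α lam)
    (q₁ : (U → ℝ) → ℝ)
    (hq₁ : ∀ α, q₁ α = (1 / 2) * ∑ t, ∑ u, ∑ u',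
      (a t * c t u * c t u') / (d t * x u * x u') * (x u * y α u' - y α u * x u') ^ 2)
    (q₂ : (U → ℝ) → ℝ)
    (hq₂ : ∀ α, q₂ α = (1 / 2) * ∑ u,
      (x u * y α (σ u) - y α u * x (σ u)) ^ 2 / (x u * x (σ u))) :
    ∀ (α : U → ℝ) (lam : T → ℝ), q α lam = q₁ α - q₂ α := by
  intro α lam
  have hσ' : Involutive σ := hσ
  have hxne : ∀ u, x u ≠ 0 := fun u => (hxpos u).ne'
  have hdne : ∀ t, d t ≠ 0 := fun t => (hdpos t).ne'
  have hzy : ∀ t, ∑ u, c t u * y α u = z α t := fun t => by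
    rw [hz, ← hσ'.bijective.sum_comp]
    simp only [hy, hσ]
  have hHodge_eq : ∀ t, a t / d t * Hodge t α lam = a t * lam t - a t * z α t ^ 2 / d t := by
    intro t
    simp only [hHodge, mul_sub, sum_sub_distrib, ← mul_assoc, ← sum_mul, ← hd, hzy]
    field_simp [hdne t]
  have hq_eq : q α lam = ∑ u, α u * α (σ u) - ∑ t, a t * z α t ^ 2 / d t := by
    rw [hq, hP, sum_congr rfl fun t _ => hHodge_eq t, sum_sub_distrib]
    ring
  have hq₁_eq : q₁ α = ∑ u, α u ^ 2 * x u / x (σ u) - ∑ t, a t * z α t ^ 2 / d t := by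
    have hxσ : ∀ u, ∑ t, c t u * a t = x (σ u) := fun u => by rw [hx, hσ]
    rw [hq₁, half_sum_sum_weighted_cross_sq_div a d c x (y α) hd hdne hxne,
      ← hσ'.bijective.sum_comp fun u => α u ^ 2 * x u / x (σ u)]
    simp only [hzy, hxσ]
    simp only [hy, hσ, mul_comm (x _)]
  have hq₂_eq : q₂ α = ∑ u, α u ^ 2 * x u / x (σ u) - ∑ u, α u * α (σ u) := by
    simp only [hq₂, hy, hσ, hσ'.sum_cross_sq_div x α hxne]
    ring
  rw [hq_eq, hq₁_eq, hq₂_eq]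
  ring

/-- Proposition "formule" of the paper: `q = q' − q''`. -/
theorem stmt_2 {T U : Type*} [Fintype T] [Fintype U] [Nonempty T] [Nonempty U]
    (σ : U → U) (hσ : ∀ u, σ (σ u) = u)
    (a : T → ℝ) (ha : ∀ t, 0 < a t)
    (c : T → U → ℝ) (hc : ∀ t u, 0 ≤ c t u)
    (x : U → ℝ) (hx : ∀ u, x u = ∑ t, c t (σ u) * a t)
    (d : T → ℝ) (hd : ∀ t, d t = ∑ u, c t u * x u)
    (hxpos : ∀ u, 0 < x u) (hdpos : ∀ t, 0 < d t)
    (y : (U → ℝ) → U → ℝ) (hy : ∀ α u, y α u = α (σ u))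
    (z : (U → ℝ) → T → ℝ) (hz : ∀ α t, z α t = ∑ u, c t (σ u) * α u)
    (P : (U → ℝ) → (T → ℝ) → ℝ)
    (hP : ∀ α lam, P α lam = (∑ u, α u * α (σ u)) - ∑ t, a t * lam t)
    (Hodge : T → (U → ℝ) → (T → ℝ) → ℝ)
    (hHodge : ∀ t α lam, Hodge t α lam = ∑ u, c t u * (x u * lam t - y α u * z α t))
    (q : (U → ℝ) → (T → ℝ) → ℝ)
    (hq : ∀ α lam, q α lam = P α lam + ∑ t, (a t / d t) * Hodge t α lam)
    (q₁ : (U → ℝ) → ℝ)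
    (hq₁ : ∀ α, q₁ α = (1 / 2) * ∑ t, ∑ u, ∑ u',
      (a t * c t u * c t u') / (d t * x u * x u') * (x u * y α u' - y α u * x u') ^ 2)
    (q₂ : (U → ℝ) → ℝ)
    (hq₂ : ∀ α, q₂ α = (1 / 2) * ∑ u,
      (x u * y α (σ u) - y α u * x (σ u)) ^ 2 / (x u * x (σ u))) :
    ∀ (α : U → ℝ) (lam : T → ℝ), q α lam = q₁ α - q₂ α :=
  stmt_2_general σ hσ a c x hx d hd hxpos hdpos y hy z hz P hP Hodge hHodge q hq q₁ hq₁ q₂ hq₂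
end

section
/- For every α : U → ℝ one has q'(α) ≥ 0 and q''(α) ≥ 0; consequently, for every α : U → ℝ and λ : T → ℝ, −q''(α) ≤ q(α,λ) ≤ q'(α). (This is the paper's decomposition of q into a nonnegative part q' and a negative part −q'', showing that the method of Arrondo–Caravantes can fail exactly because of the term q''.) -/
/-!
Write `y = α ∘ σ`, `z_t = ∑ c_t(u) y(u)` and `S = ∑ y(u)² x(σ u) / x(u)`. Using `d_t = ∑ c_t(u) x(u)`,
the Hodge terms collapse to `d_t λ_t − z_t²`, so `q = ∑ α(u) α(σ u) − ∑ (a_t / d_t) z_t²` no longer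
depends on `λ`. The weighted Lagrange identity turns `q'` into `S − ∑ (a_t / d_t) z_t²`, because
`∑_t a_t c_t(u) = x(σ u)`, and reindexing along the involution turns `q''` into
`S − ∑ α(u) α(σ u)`. Hence `q = q' − q''`, and `q'`, `q''` are sums of squares with nonnegative
weights.
-/

open Finset

theorem sq_mul_sub_mul_div_mul {a b p q : ℝ} (ha : a ≠ 0) (hb : b ≠ 0) :
    (a * q - p * b) ^ 2 / (a * b) = a * q ^ 2 / b - 2 * (p * q) + p ^ 2 * b / a := by
  field_simp
  ring

-- Weighted Lagrange identity.
theorem Finset.half_sum_sum_mul_div_mul_sq_sub {ι : Type*} (s : Finset ι) (c x y : ι → ℝ)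
    (hx : ∀ i ∈ s, x i ≠ 0) :
    (1 / 2) * ∑ i ∈ s, ∑ j ∈ s, c i * c j / (x i * x j) * (x i * y j - y i * x j) ^ 2 =
      (∑ i ∈ s, c i * x i) * (∑ i ∈ s, c i * y i ^ 2 / x i) - (∑ i ∈ s, c i * y i) ^ 2 := by
  have expand : ∀ i ∈ s, ∀ j ∈ s, c i * c j / (x i * x j) * (x i * y j - y i * x j) ^ 2 =
      c i * x i * (c j * y j ^ 2 / x j) - 2 * (c i * y i * (c j * y j)) +
        c i * y i ^ 2 / x i * (c j * x j) := by
    intro i hi j hj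
    rw [div_mul_eq_mul_div, mul_div_assoc, sq_mul_sub_mul_div_mul (hx i hi) (hx j hj)]
    ring
  simp_rw [sum_congr rfl fun i hi => sum_congr rfl (expand i hi), sum_add_distrib,
    sum_sub_distrib, ← mul_sum, ← sum_mul]
  ring

theorem Function.Involutive.half_sum_sq_sub_div {ι : Type*} [Fintype ι] {σ : ι → ι}
    (hσ : σ.Involutive) (x w : ι → ℝ) (hx : ∀ i, x i ≠ 0) :
    (1 / 2) * ∑ i, (x i * w (σ i) - w i * x (σ i)) ^ 2 / (x i * x (σ i)) =
      ∑ i, w i ^ 2 * x (σ i) / x i - ∑ i, w i * w (σ i) := by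
  have expand : ∀ i, (x i * w (σ i) - w i * x (σ i)) ^ 2 / (x i * x (σ i)) =
      w (σ i) ^ 2 * x (σ (σ i)) / x (σ i) - 2 * (w i * w (σ i)) + w i ^ 2 * x (σ i) / x i := by
    intro i
    rw [hσ i, sq_mul_sub_mul_div_mul (hx i) (hx (σ i))]
    ring
  rw [sum_congr rfl fun i _ => expand i, sum_add_distrib, sum_sub_distrib, ← mul_sum,
    Fintype.sum_bijective σ hσ.bijective _ (fun i => w i ^ 2 * x (σ i) / x i) fun _ => rfl]
  ring

section

variable {T U : Type*} [Fintype T] [Fintype U]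

theorem sum_div_mul_sum_mul_sub_mul (a d lam z : T → ℝ) (c : T → U → ℝ) (x y : U → ℝ)
    (hd : ∀ t, d t = ∑ u, c t u * x u) (hd0 : ∀ t, d t ≠ 0)
    (hz : ∀ t, z t = ∑ u, c t u * y u) :
    ∑ t, a t / d t * ∑ u, c t u * (x u * lam t - y u * z t) =
      ∑ t, a t * lam t - ∑ t, a t / d t * z t ^ 2 := by
  have inner : ∀ t, a t / d t * ∑ u, c t u * (x u * lam t - y u * z t) =
      a t * lam t - a t / d t * z t ^ 2 := by
    intro t
    simp_rw [mul_sub, sum_sub_distrib, ← mul_assoc, ← sum_mul, ← hd, ← hz]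
    field_simp [hd0 t]
  rw [sum_congr rfl fun t _ => inner t, sum_sub_distrib]

theorem half_sum_sum_sum_div_mul_sq_sub (a d : T → ℝ) (c : T → U → ℝ) (x y : U → ℝ)
    (hx : ∀ u, x u ≠ 0) (hd : ∀ t, d t = ∑ u, c t u * x u) (hd0 : ∀ t, d t ≠ 0) :
    (1 / 2) * ∑ t, ∑ u, ∑ u',
        a t * c t u * c t u' / (d t * x u * x u') * (x u * y u' - y u * x u') ^ 2 =
      ∑ u, y u ^ 2 * (∑ t, c t u * a t) / x u - ∑ t, a t / d t * (∑ u, c t u * y u) ^ 2 := by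
  have inner : ∀ t, (1 / 2) * ∑ u, ∑ u',
      a t * c t u * c t u' / (d t * x u * x u') * (x u * y u' - y u * x u') ^ 2 =
        a t * ∑ u, c t u * y u ^ 2 / x u - a t / d t * (∑ u, c t u * y u) ^ 2 := by
    intro t
    have factor : ∀ u u', a t * c t u * c t u' / (d t * x u * x u') =
        a t / d t * (c t u * c t u' / (x u * x u')) := fun u u' => by ring
    simp_rw [factor, mul_assoc (a t / d t), ← mul_sum, mul_left_comm (1 / 2 : ℝ),
      half_sum_sum_mul_div_mul_sq_sub univ (c t) x y fun u _ => hx u, ← hd]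
    field_simp [hd0 t]
  rw [mul_sum, sum_congr rfl fun t _ => inner t, sum_sub_distrib]
  simp_rw [mul_sum, sum_div]
  rw [sum_comm]
  congr 1
  refine sum_congr rfl fun u _ => sum_congr rfl fun t _ => ?_
  ring

end

theorem stmt_3_general {T U : Type*} [Fintype T] [Fintype U]
    (σ : U → U) (hσ : ∀ u, σ (σ u) = u)
    (a : T → ℝ) (ha : ∀ t, 0 < a t)
    (c : T → U → ℝ) (hc : ∀ t u, 0 ≤ c t u)
    (x : U → ℝ) (hx : ∀ u, x u = ∑ t, c t (σ u) * a t)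
    (d : T → ℝ) (hd : ∀ t, d t = ∑ u, c t u * x u)
    (hxpos : ∀ u, 0 < x u) (hdpos : ∀ t, 0 < d t)
    (y : (U → ℝ) → U → ℝ) (hy : ∀ α u, y α u = α (σ u))
    (z : (U → ℝ) → T → ℝ) (hz : ∀ α t, z α t = ∑ u, c t (σ u) * α u)
    (P : (U → ℝ) → (T → ℝ) → ℝ)
    (hP : ∀ α lam, P α lam = (∑ u, α u * α (σ u)) - ∑ t, a t * lam t)
    (Hodge : T → (U → ℝ) → (T → ℝ) → ℝ)
    (hHodge : ∀ t α lam, Hodge t α lam = ∑ u, c t u * (x u * lam t - y α u * z α t))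
    (q : (U → ℝ) → (T → ℝ) → ℝ)
    (hq : ∀ α lam, q α lam = P α lam + ∑ t, (a t / d t) * Hodge t α lam)
    (q₁ : (U → ℝ) → ℝ)
    (hq₁ : ∀ α, q₁ α = (1 / 2) * ∑ t, ∑ u, ∑ u',
      (a t * c t u * c t u') / (d t * x u * x u') * (x u * y α u' - y α u * x u') ^ 2)
    (q₂ : (U → ℝ) → ℝ)
    (hq₂ : ∀ α, q₂ α = (1 / 2) * ∑ u,
      (x u * y α (σ u) - y α u * x (σ u)) ^ 2 / (x u * x (σ u))) :
    (∀ α : U → ℝ, 0 ≤ q₁ α) ∧ (∀ α : U → ℝ, 0 ≤ q₂ α) ∧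
    (∀ (α : U → ℝ) (lam : T → ℝ), -q₂ α ≤ q α lam ∧ q α lam ≤ q₁ α) := by
  have hx0 : ∀ u, x u ≠ 0 := fun u => (hxpos u).ne'
  have hd0 : ∀ t, d t ≠ 0 := fun t => (hdpos t).ne'
  have hz' : ∀ α t, z α t = ∑ u, c t u * y α u := fun α t => by
    rw [hz]
    exact Fintype.sum_bijective σ (Function.Involutive.bijective hσ) _ _ fun u => by rw [hy, hσ]
  have hxσ : ∀ u, x (σ u) = ∑ t, c t u * a t := fun u => by simp only [hx, hσ]
  have hq_sub : ∀ α lam, q α lam = q₁ α - q₂ α := fun α lam => by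
    rw [hq, hP, hq₁, hq₂, Function.Involutive.half_sum_sq_sub_div hσ x (y α) hx0,
      half_sum_sum_sum_div_mul_sq_sub a d c x (y α) hx0 hd hd0]
    simp only [hHodge, ← hz', ← hxσ]
    rw [sum_div_mul_sum_mul_sub_mul a d lam (z α) c x (y α) hd hd0 (hz' α)]
    have hαα : ∑ u, y α u * y α (σ u) = ∑ u, α u * α (σ u) :=
      sum_congr rfl fun u _ => by rw [hy, hy, hσ, mul_comm]
    rw [hαα]
    ring
  have hq₁_nonneg : ∀ α, 0 ≤ q₁ α := fun α => by
    rw [hq₁]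
    refine mul_nonneg (by norm_num) <| sum_nonneg fun t _ => sum_nonneg fun u _ =>
      sum_nonneg fun u' _ => mul_nonneg (div_nonneg ?_ ?_) (sq_nonneg _)
    · exact mul_nonneg (mul_nonneg (ha t).le (hc t u)) (hc t u')
    · exact (mul_pos (mul_pos (hdpos t) (hxpos u)) (hxpos u')).le
  have hq₂_nonneg : ∀ α, 0 ≤ q₂ α := fun α => by
    rw [hq₂]
    exact mul_nonneg (by norm_num) <| sum_nonneg fun u _ =>
      div_nonneg (sq_nonneg _) (mul_pos (hxpos u) (hxpos (σ u))).le
  refine ⟨hq₁_nonneg, hq₂_nonneg, fun α lam => ?_⟩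
  rw [hq_sub]
  exact ⟨by linarith [hq₁_nonneg α], by linarith [hq₂_nonneg α]⟩

/-- `q' ≥ 0` and `q'' ≥ 0`; consequently `−q'' ≤ q ≤ q'`. -/
theorem stmt_3 {T U : Type*} [Fintype T] [Fintype U] [Nonempty T] [Nonempty U]
    (σ : U → U) (hσ : ∀ u, σ (σ u) = u)
    (a : T → ℝ) (ha : ∀ t, 0 < a t)
    (c : T → U → ℝ) (hc : ∀ t u, 0 ≤ c t u)
    (x : U → ℝ) (hx : ∀ u, x u = ∑ t, c t (σ u) * a t)
    (d : T → ℝ) (hd : ∀ t, d t = ∑ u, c t u * x u)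
    (hxpos : ∀ u, 0 < x u) (hdpos : ∀ t, 0 < d t)
    (y : (U → ℝ) → U → ℝ) (hy : ∀ α u, y α u = α (σ u))
    (z : (U → ℝ) → T → ℝ) (hz : ∀ α t, z α t = ∑ u, c t (σ u) * α u)
    (P : (U → ℝ) → (T → ℝ) → ℝ)
    (hP : ∀ α lam, P α lam = (∑ u, α u * α (σ u)) - ∑ t, a t * lam t)
    (Hodge : T → (U → ℝ) → (T → ℝ) → ℝ)
    (hHodge : ∀ t α lam, Hodge t α lam = ∑ u, c t u * (x u * lam t - y α u * z α t))
    (q : (U → ℝ) → (T → ℝ) → ℝ)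
    (hq : ∀ α lam, q α lam = P α lam + ∑ t, (a t / d t) * Hodge t α lam)
    (q₁ : (U → ℝ) → ℝ)
    (hq₁ : ∀ α, q₁ α = (1 / 2) * ∑ t, ∑ u, ∑ u',
      (a t * c t u * c t u') / (d t * x u * x u') * (x u * y α u' - y α u * x u') ^ 2)
    (q₂ : (U → ℝ) → ℝ)
    (hq₂ : ∀ α, q₂ α = (1 / 2) * ∑ u,
      (x u * y α (σ u) - y α u * x (σ u)) ^ 2 / (x u * x (σ u))) :
    (∀ α : U → ℝ, 0 ≤ q₁ α) ∧ (∀ α : U → ℝ, 0 ≤ q₂ α) ∧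
    (∀ (α : U → ℝ) (lam : T → ℝ), -q₂ α ≤ q α lam ∧ q α lam ≤ q₁ α) :=
  stmt_3_general σ hσ a ha c hc x hx d hd hxpos hdpos y hy z hz P hP Hodge hHodge q hq q₁ hq₁ q₂ hq₂
end

section
/- (Abstract form of Corollary 'multi' of the paper.) Let α : U → ℝ and λ : T → ℝ satisfy: (i) P(α,λ) = 0; (ii) Hodge_t(α,λ) ≤ 0 for every t ∈ T; (iii) x(u)·α(u) = x(σ(u))·α(σ(u)) for every u ∈ U (vanishing of the minors indexed by Poincaré-dual pairs). Assume moreover the connectivity condition: for all u, u' ∈ U there is a finite chain u = u₀, u₁, …, u_k = u' in U such that for each i there exists t ∈ T with c(t)(u_i) > 0 and c(t)(u_{i+1}) > 0. Then there exists ρ ∈ ℝ such that α(σ(u)) = ρ·x(u) for every u ∈ U and λ(t) = ρ·z(t) for every t ∈ T (i.e., the 2-row matrix M with columns (x(u), α(σ(u))) for u ∈ U and (z(t), λ(t)) for t ∈ T has rank at most one). -/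
open Finset

/-!
The vanishing dual minors give `α u * α (σ u) = x (σ u) * y u ^ 2 / x u`; summing against
`x (σ u) = ∑ₜ c t u * a t` and using `P = 0` turns `∑ₜ (a t / d t) * Hodge t` into
`∑ₜ (a t / d t) * (d t * ∑ᵤ c t u * y u ^ 2 / x u - z t ^ 2)`. Since `d t = ∑ᵤ c t u * x u` and
`z t = ∑ᵤ c t u * y u`, each bracket is a weighted Cauchy–Schwarz gap, hence nonnegative, while
each `Hodge t` is nonpositive; so all of them vanish. Equality in Cauchy–Schwarz makes `y / x`
constant on the support of every `c t`, hence on all of `U` by connectivity, and `Hodge t = 0`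
then forces `lam t = ρ * z t`.
-/

section CauchySchwarz

variable {ι K : Type*} {s : Finset ι} {w x y : ι → K}

theorem two_mul_sum_mul_sum_div_sub_sq_eq [Field K] (hx : ∀ i ∈ s, x i ≠ 0) :
    2 * ((∑ i ∈ s, w i * x i) * (∑ i ∈ s, w i * y i ^ 2 / x i) -
        (∑ i ∈ s, w i * y i) ^ 2) =
      ∑ i ∈ s, ∑ j ∈ s, w i * w j * (x i * y j - y i * x j) ^ 2 / (x i * x j) := by
  have hterm : ∀ i ∈ s, ∀ j ∈ s, w i * w j * (x i * y j - y i * x j) ^ 2 / (x i * x j) =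
      w i * x i * (w j * y j ^ 2 / x j) + w i * y i ^ 2 / x i * (w j * x j)
        - 2 * (w i * y i * (w j * y j)) := by
    intro i hi j hj
    field_simp [hx i hi, hx j hj]
    ring
  rw [sum_congr rfl fun i hi => sum_congr rfl (hterm i hi)]
  simp only [sum_add_distrib, sum_sub_distrib, ← mul_sum, ← sum_mul]
  ring

variable [Field K] [LinearOrder K] [IsStrictOrderedRing K]

theorem mul_mul_sq_div_mul_nonneg {i j : ι} (hwi : 0 ≤ w i) (hwj : 0 ≤ w j) (hxi : 0 < x i)
    (hxj : 0 < x j) : 0 ≤ w i * w j * (x i * y j - y i * x j) ^ 2 / (x i * x j) := by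
  have := mul_pos hxi hxj
  positivity

theorem sq_sum_mul_le_sum_mul_mul_sum_sq_div (hw : ∀ i ∈ s, 0 ≤ w i)
    (hx : ∀ i ∈ s, 0 < x i) :
    (∑ i ∈ s, w i * y i) ^ 2 ≤ (∑ i ∈ s, w i * x i) * (∑ i ∈ s, w i * y i ^ 2 / x i) := by
  have h := two_mul_sum_mul_sum_div_sub_sq_eq (w := w) (y := y) fun i hi => (hx i hi).ne'
  have : 0 ≤ ∑ i ∈ s, ∑ j ∈ s, w i * w j * (x i * y j - y i * x j) ^ 2 / (x i * x j) :=
    sum_nonneg fun i hi => sum_nonneg fun j hj =>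
      mul_mul_sq_div_mul_nonneg (hw i hi) (hw j hj) (hx i hi) (hx j hj)
  linarith

theorem mul_eq_mul_of_sq_sum_eq_sum_mul_mul_sum_sq_div (hw : ∀ i ∈ s, 0 ≤ w i)
    (hx : ∀ i ∈ s, 0 < x i)
    (h : (∑ i ∈ s, w i * y i) ^ 2 =
      (∑ i ∈ s, w i * x i) * (∑ i ∈ s, w i * y i ^ 2 / x i))
    {i j : ι} (hi : i ∈ s) (hj : j ∈ s) (hwi : 0 < w i) (hwj : 0 < w j) :
    x i * y j = y i * x j := by
  have hsum := two_mul_sum_mul_sum_div_sub_sq_eq (w := w) (y := y) fun i hi => (hx i hi).ne'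
  rw [h, sub_self, mul_zero, eq_comm, sum_eq_zero_iff_of_nonneg fun i hi => sum_nonneg
    fun j hj => mul_mul_sq_div_mul_nonneg (hw i hi) (hw j hj) (hx i hi) (hx j hj)] at hsum
  have hterm := (sum_eq_zero_iff_of_nonneg fun j hj => mul_mul_sq_div_mul_nonneg (hw i hi)
    (hw j hj) (hx i hi) (hx j hj)).mp (hsum i hi) j hj
  have hpos : 0 < w i * w j := mul_pos hwi hwj
  have hxpos : 0 < x i * x j := mul_pos (hx i hi) (hx j hj)
  simpa [hpos.ne', hxpos.ne', sub_eq_zero] using hterm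

end CauchySchwarz

theorem forall_eq_zero_of_sum_mul_eq_sum_mul {ι K : Type*} [Ring K] [LinearOrder K]
    [IsStrictOrderedRing K] {s : Finset ι} {w f g : ι → K} (hw : ∀ i ∈ s, 0 < w i)
    (hf : ∀ i ∈ s, 0 ≤ f i) (hg : ∀ i ∈ s, g i ≤ 0)
    (h : ∑ i ∈ s, w i * f i = ∑ i ∈ s, w i * g i) : ∀ i ∈ s, f i = 0 ∧ g i = 0 := by
  have hwf : ∀ i ∈ s, 0 ≤ w i * f i := fun i hi => mul_nonneg (hw i hi).le (hf i hi)
  have hwg : ∀ i ∈ s, w i * g i ≤ 0 := fun i hi =>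
    mul_nonpos_of_nonneg_of_nonpos (hw i hi).le (hg i hi)
  have hf0 : ∑ i ∈ s, w i * f i = 0 :=
    le_antisymm (h ▸ sum_nonpos hwg) (sum_nonneg hwf)
  have hg0 : ∑ i ∈ s, w i * g i = 0 := h ▸ hf0
  intro i hi
  have hwi := (hw i hi).ne'
  exact ⟨(mul_eq_zero.mp ((sum_eq_zero_iff_of_nonneg hwf).mp hf0 i hi)).resolve_left hwi,
    (mul_eq_zero.mp ((sum_eq_zero_iff_of_nonpos hwg).mp hg0 i hi)).resolve_left hwi⟩

theorem mul_eq_mul_of_reflTransGen {α M : Type*} [CommMonoidWithZero M] [IsCancelMulZero M]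
    {R : α → α → Prop} {x y : α → M} (hx : ∀ a, x a ≠ 0)
    (hR : ∀ a b, R a b → x a * y b = y a * x b) {a b : α} (h : Relation.ReflTransGen R a b) :
    x a * y b = y a * x b := by
  induction h with
  | refl => exact mul_comm _ _
  | @tail b c _ hbc ih =>
    refine mul_left_cancel₀ (hx b) ?_
    calc x b * (x a * y c) = x a * (x b * y c) := mul_left_comm _ _ _
      _ = x a * y b * x c := by rw [hR b c hbc, mul_assoc]
      _ = x b * (y a * x c) := by rw [ih, mul_comm (y a), mul_assoc]

theorem exists_eq_mul_of_forall_reflTransGen {α K : Type*} [Nonempty α] [Field K]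
    {R : α → α → Prop} {x y : α → K} (hx : ∀ a, x a ≠ 0)
    (hR : ∀ a b, R a b → x a * y b = y a * x b) (hconn : ∀ a b, Relation.ReflTransGen R a b) :
    ∃ ρ : K, ∀ a, y a = ρ * x a := by
  obtain ⟨a₀⟩ := ‹Nonempty α›
  refine ⟨y a₀ / x a₀, fun a => ?_⟩
  rw [div_mul_eq_mul_div, eq_div_iff (hx a₀), mul_comm,
    mul_eq_mul_of_reflTransGen hx hR (hconn a₀ a)]

theorem sum_mul_mul_sub_mul_eq {ι R : Type*} [CommRing R] (s : Finset ι) (c x y : ι → R)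
    (l z : R) :
    ∑ i ∈ s, c i * (x i * l - y i * z) = (∑ i ∈ s, c i * x i) * l - (∑ i ∈ s, c i * y i) * z := by
  rw [sum_mul, sum_mul, ← sum_sub_distrib]
  exact sum_congr rfl fun i _ => by ring

section DualPairs

variable {T U K : Type*} [Fintype T] [Fintype U] [Field K] {σ : U → U} {a : T → K}
  {c : T → U → K} {x α : U → K}

theorem sum_mul_comp_eq_sum_mul_sum_sq_div (hσ : Function.Involutive σ)
    (hx : ∀ u, x u = ∑ t, c t (σ u) * a t) (hxne : ∀ u, x u ≠ 0)
    (hminor : ∀ u, x u * α u = x (σ u) * α (σ u)) :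
    ∑ u, α u * α (σ u) = ∑ t, a t * ∑ u, c t u * α (σ u) ^ 2 / x u := by
  have hterm : ∀ u, α u * α (σ u) = (∑ t, c t u * a t) * (α (σ u) ^ 2 / x u) := fun u => by
    rw [← hσ u, ← hx (σ u), hσ u]
    field_simp [hxne u]
    linear_combination α (σ u) * hminor u
  simp only [hterm, sum_mul, mul_sum]
  rw [sum_comm]
  exact sum_congr rfl fun t _ => sum_congr rfl fun u _ => by ring

theorem sum_div_mul_sub_sq_eq_add (hσ : Function.Involutive σ)
    (hx : ∀ u, x u = ∑ t, c t (σ u) * a t) (hxne : ∀ u, x u ≠ 0)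
    (hminor : ∀ u, x u * α u = x (σ u) * α (σ u)) {d : T → K} (hd : ∀ t, d t ≠ 0)
    (lam z : T → K) :
    ∑ t, a t / d t * (d t * ∑ u, c t u * α (σ u) ^ 2 / x u - z t ^ 2) =
      (∑ u, α u * α (σ u) - ∑ t, a t * lam t) + ∑ t, a t / d t * (d t * lam t - z t ^ 2) := by
  have hcancel : ∀ t, a t / d t * d t = a t := fun t => div_mul_cancel₀ _ (hd t)
  simp only [mul_sub, ← mul_assoc, hcancel, sum_sub_distrib,
    sum_mul_comp_eq_sum_mul_sum_sq_div hσ hx hxne hminor]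
  ring

end DualPairs

theorem stmt_4_general {T U : Type*} [Fintype T] [Fintype U] [Nonempty U]
    (σ : U → U) (hσ : ∀ u, σ (σ u) = u)
    (a : T → ℝ) (ha : ∀ t, 0 < a t)
    (c : T → U → ℝ) (hc : ∀ t u, 0 ≤ c t u)
    (x : U → ℝ) (hx : ∀ u, x u = ∑ t, c t (σ u) * a t)
    (d : T → ℝ) (hd : ∀ t, d t = ∑ u, c t u * x u)
    (hxpos : ∀ u, 0 < x u) (hdpos : ∀ t, 0 < d t)
    (α : U → ℝ) (lam : T → ℝ)
    (y : U → ℝ) (hy : ∀ u, y u = α (σ u))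
    (z : T → ℝ) (hz : ∀ t, z t = ∑ u, c t (σ u) * α u)
    (P : ℝ) (hP : P = (∑ u, α u * α (σ u)) - ∑ t, a t * lam t)
    (Hodge : T → ℝ)
    (hHodge : ∀ t, Hodge t = ∑ u, c t u * (x u * lam t - y u * z t))
    (hP0 : P = 0)
    (hHodge0 : ∀ t, Hodge t ≤ 0)
    (hminor : ∀ u, x u * α u = x (σ u) * α (σ u))
    (hconn : ∀ u u' : U,
      Relation.ReflTransGen (fun v w => ∃ t, 0 < c t v ∧ 0 < c t w) u u') :
    ∃ ρ : ℝ, (∀ u, α (σ u) = ρ * x u) ∧ (∀ t, lam t = ρ * z t) := by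
  have hxne : ∀ u, x u ≠ 0 := fun u => (hxpos u).ne'
  have hz' : ∀ t, z t = ∑ u, c t u * y u := fun t => by
    rw [hz, ← (Function.Involutive.bijective hσ).sum_comp]
    simp only [hσ, hy]
  have hHodge' : ∀ t, Hodge t = d t * lam t - z t ^ 2 := fun t => by
    rw [hHodge, sum_mul_mul_sub_mul_eq, ← hd, ← hz', sq]
  have hCS : ∀ t, z t ^ 2 ≤ d t * ∑ u, c t u * y u ^ 2 / x u := fun t => by
    simpa only [hz', hd] using
      sq_sum_mul_le_sum_mul_mul_sum_sq_div (y := y) (fun u _ => hc t u) fun u _ => hxpos u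
  have hq := sum_div_mul_sub_sq_eq_add hσ hx hxne hminor (fun t => (hdpos t).ne') lam z
  rw [← hP, hP0, zero_add] at hq
  simp only [← hy, ← hHodge'] at hq
  have hzero := forall_eq_zero_of_sum_mul_eq_sum_mul (fun t _ => div_pos (ha t) (hdpos t))
    (fun t _ => sub_nonneg.mpr (hCS t)) (fun t _ => hHodge0 t) hq
  have hcross : ∀ u v, (∃ t, 0 < c t u ∧ 0 < c t v) → x u * y v = y u * x v := by
    rintro u v ⟨t, hu, hv⟩
    refine mul_eq_mul_of_sq_sum_eq_sum_mul_mul_sum_sq_div (fun u _ => hc t u)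
      (fun u _ => hxpos u) ?_ (mem_univ u) (mem_univ v) hu hv
    rw [← hz', ← hd]; linarith [(hzero t (mem_univ t)).1]
  obtain ⟨ρ, hρ⟩ := exists_eq_mul_of_forall_reflTransGen hxne hcross hconn
  refine ⟨ρ, fun u => hy u ▸ hρ u, fun t => mul_left_cancel₀ (hdpos t).ne' ?_⟩
  have hzd : z t = ρ * d t := by
    rw [hz', hd, mul_sum]
    exact sum_congr rfl fun u _ => by rw [hρ u]; ring
  linear_combination (hHodge' t).symm.trans (hzero t (mem_univ t)).2 + z t * hzd

/-- Abstract form of Corollary "multi" of the paper: if `P = 0`, all `Hodge_t ≤ 0`,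
all minors indexed by Poincaré-dual pairs vanish, and the support of the Pieri
coefficients is connected, then the matrix `M` has rank at most one. -/
theorem stmt_4 {T U : Type*} [Fintype T] [Fintype U] [Nonempty T] [Nonempty U]
    (σ : U → U) (hσ : ∀ u, σ (σ u) = u)
    (a : T → ℝ) (ha : ∀ t, 0 < a t)
    (c : T → U → ℝ) (hc : ∀ t u, 0 ≤ c t u)
    (x : U → ℝ) (hx : ∀ u, x u = ∑ t, c t (σ u) * a t)
    (d : T → ℝ) (hd : ∀ t, d t = ∑ u, c t u * x u)
    (hxpos : ∀ u, 0 < x u) (hdpos : ∀ t, 0 < d t)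
    (α : U → ℝ) (lam : T → ℝ)
    (y : U → ℝ) (hy : ∀ u, y u = α (σ u))
    (z : T → ℝ) (hz : ∀ t, z t = ∑ u, c t (σ u) * α u)
    (P : ℝ) (hP : P = (∑ u, α u * α (σ u)) - ∑ t, a t * lam t)
    (Hodge : T → ℝ)
    (hHodge : ∀ t, Hodge t = ∑ u, c t u * (x u * lam t - y u * z t))
    (hP0 : P = 0)
    (hHodge0 : ∀ t, Hodge t ≤ 0)
    (hminor : ∀ u, x u * α u = x (σ u) * α (σ u))
    (hconn : ∀ u u' : U,
      Relation.ReflTransGen (fun v w => ∃ t, 0 < c t v ∧ 0 < c t w) u u') :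
    ∃ ρ : ℝ, (∀ u, α (σ u) = ρ * x u) ∧ (∀ t, lam t = ρ * z t) :=
  stmt_4_general σ hσ a ha c hc x hx d hd hxpos hdpos α lam y hy z hz P hP Hodge hHodge hP0 hHodge0
    hminor hconn
end
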